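/- Let M be a representation of the bound quiver (Q, αβ=0) as above (arrows α: 2→1, β: 3→2, γ: 3→1, arrows i→i−1 for 4 ≤ i ≤ n, relation M_α ∘ M_β = 0). If the endomorphism ring End(M) is a division ring, then M_α = 0 or M_β = 0. -/
import Mathlib


/-- A representation of the bound quiver (Q, αβ = 0): vertices 1,…,n (n ≥ 3),
arrows α : 2 → 1, β : 3 → 2, γ : 3 → 1, and arrows δᵢ : i → i-1 for 4 ≤ i ≤ n,
with the relation α ∘ β = 0. -/
structure QRep (k : Type) [Field k] (n : ℕ) where
  V : ℕ → Type
  [acg : ∀ i, AddCommGroup (V i)]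
  [mod : ∀ i, Module k (V i)]
  fd : ∀ i, FiniteDimensional k (V i)
  supp : ∀ i, (i = 0 ∨ n < i) → Subsingleton (V i)
  α : V 2 →ₗ[k] V 1
  β : V 3 →ₗ[k] V 2
  γ : V 3 →ₗ[k] V 1
  δ : ∀ i, 4 ≤ i → i ≤ n → (V i →ₗ[k] V (i-1))
  rel : α ∘ₗ β = 0

attribute [instance] QRep.acg QRep.mod

variable {k : Type} [Field k] {n : ℕ}

/-- An endomorphism of a representation of (Q, αβ = 0): linear maps at each
vertex commuting with all arrow maps. -/
structure QEnd (M : QRep k n) where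
  f : ∀ i, M.V i →ₗ[k] M.V i
  commα : f 1 ∘ₗ M.α = M.α ∘ₗ f 2
  commβ : f 2 ∘ₗ M.β = M.β ∘ₗ f 3
  commγ : f 1 ∘ₗ M.γ = M.γ ∘ₗ f 3
  commδ : ∀ i (h1 : 4 ≤ i) (h2 : i ≤ n),
    f (i-1) ∘ₗ M.δ i h1 h2 = M.δ i h1 h2 ∘ₗ f i

/-- A family of subspaces closed under all the arrow maps (a subrepresentation). -/
def IsSubrep (M : QRep k n) (p : ∀ i, Submodule k (M.V i)) : Prop :=
  (∀ x ∈ p 2, M.α x ∈ p 1) ∧ (∀ x ∈ p 3, M.β x ∈ p 2) ∧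
  (∀ x ∈ p 3, M.γ x ∈ p 1) ∧
  (∀ i (h1 : 4 ≤ i) (h2 : i ≤ n), ∀ x ∈ p i, M.δ i h1 h2 x ∈ p (i-1))

/-- A representation is indecomposable iff it is nonzero and admits no splitting
into two nonzero complementary subrepresentations. -/
def QIndec (M : QRep k n) : Prop :=
  (∃ i, ∃ x : M.V i, x ≠ 0) ∧
  ∀ p q, IsSubrep M p → IsSubrep M q → (∀ i, IsCompl (p i) (q i)) →
    (∀ i, p i = ⊥) ∨ (∀ i, q i = ⊥)


/-- Auxiliary: the family of maps which is `g` at vertex 2 and zero elsewhere. -/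
def onevert {k : Type} [Field k] {n : ℕ} (M : QRep k n) (g : M.V 2 →ₗ[k] M.V 2) :
    ∀ i, M.V i →ₗ[k] M.V i
  | 2 => g
  | _ => 0

lemma onevert_two {k : Type} [Field k] {n : ℕ} (M : QRep k n) (g : M.V 2 →ₗ[k] M.V 2) :
    onevert M g 2 = g := rfl

lemma onevert_ne {k : Type} [Field k] {n : ℕ} (M : QRep k n) (g : M.V 2 →ₗ[k] M.V 2) :
    ∀ i, i ≠ 2 → onevert M g i = 0
  | 0, _ => rfl
  | 1, _ => rfl
  | 2, h => absurd rfl h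
  | (_+3), _ => rfl

/-- If the endomorphism ring of a representation M of (Q, αβ = 0)
is a division ring (i.e. every nonzero endomorphism is invertible and M has a
nonzero endomorphism, namely the identity, with 1 ≠ 0), then M_α = 0 or M_β = 0. -/
theorem stmt1 {k : Type} [Field k] {n : ℕ} (hn : 3 ≤ n) (M : QRep k n)
    (hdiv : ∀ φ : QEnd M, (∃ i, φ.f i ≠ 0) →
      ∃ ψ : QEnd M, ∀ i, ψ.f i ∘ₗ φ.f i = LinearMap.id ∧ φ.f i ∘ₗ ψ.f i = LinearMap.id) :
    M.α = 0 ∨ M.β = 0 := by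
  by_contra h
  push_neg at h
  obtain ⟨hα, hβ⟩ := h
  have hrange : LinearMap.range M.β < ⊤ := by
    rw [lt_top_iff_ne_top]
    intro htop
    apply hα
    ext x
    obtain ⟨y, hy⟩ := LinearMap.range_eq_top.mp htop x
    have := DFunLike.congr_fun M.rel y
    simp only [LinearMap.comp_apply, LinearMap.zero_apply] at this
    simp [← hy, this]
  obtain ⟨ℓ, hℓne, hℓbot⟩ := (LinearMap.range M.β).exists_dual_map_eq_bot_of_lt_top hrange
    inferInstance
  have hℓ0 : ∀ y, ℓ (M.β y) = 0 := by
    intro y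
    have : ℓ (M.β y) ∈ (LinearMap.range M.β).map ℓ :=
      Submodule.mem_map_of_mem (LinearMap.mem_range_self _ _)
    rwa [hℓbot, Submodule.mem_bot] at this
  obtain ⟨w, hw⟩ : ∃ w, M.β w ≠ 0 := by
    by_contra hc
    push_neg at hc
    exact hβ (LinearMap.ext fun y => hc y)
  set v : M.V 2 := M.β w with hv
  set g : M.V 2 →ₗ[k] M.V 2 := ℓ.smulRight v with hg
  have hgβ : ∀ y, g (M.β y) = 0 := by
    intro y; simp [hg, hℓ0 y]
  have hαg : ∀ x, M.α (g x) = 0 := by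
    intro x
    have := DFunLike.congr_fun M.rel w
    simp only [LinearMap.comp_apply, LinearMap.zero_apply] at this
    simp [hg, hv, this]
  have hgg : ∀ x, g (g x) = 0 := by
    intro x; simp [hg, hℓ0 w, hv]
  have hgne : g ≠ 0 := by
    obtain ⟨u, hu⟩ : ∃ u, ℓ u ≠ 0 := by
      by_contra hc; push_neg at hc; exact hℓne (LinearMap.ext fun u => hc u)
    intro hc
    apply hw
    have : g u = 0 := by rw [hc]; rfl
    rw [hg] at this
    simp only [LinearMap.smulRight_apply, smul_eq_zero] at this
    exact this.resolve_left hu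
  let φ : QEnd M :=
    { f := onevert M g
      commα := by
        rw [onevert_ne M g 1 (by omega), onevert_two]
        ext x
        simp [hαg x]
      commβ := by
        rw [onevert_ne M g 3 (by omega), onevert_two]
        ext y
        simp [hgβ y]
      commγ := by
        rw [onevert_ne M g 1 (by omega), onevert_ne M g 3 (by omega)]
        ext y; simp
      commδ := by
        intro i h1 h2
        rw [onevert_ne M g (i-1) (by omega), onevert_ne M g i (by omega)]
        ext x; simp }
  obtain ⟨ψ, hψ⟩ := hdiv φ ⟨2, hgne⟩
  have h2 := (hψ 2).1
  apply hgne
  apply LinearMap.ext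
  intro x
  have e1 : ψ.f 2 (φ.f 2 (g x)) = g x := DFunLike.congr_fun h2 (g x)
  have e2 : φ.f 2 (g x) = g (g x) := rfl
  rw [e2, hgg x, map_zero] at e1
  exact e1.symm
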